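/- arXiv:1106.5189 — 5 statements merged into one kernel-verified Lean document; each statement's English description precedes it below -/
import Mathlib

section
/- With 𝔤 a nonassociative algebra over a field of characteristic zero and K the K-operator on T(𝔤), the map K is a bijection of T(𝔤). -/
/-!
Filter `T(𝔤)` by degree. Each `τ_x` is a derivation mapping generators to generators, so it
preserves the filtration. Rewriting the defining relation as `K(x ⊗ a) = x ⊗ K(a) - K(τ_x a)`,
induction on the degree shows that `K - id` vanishes in degree `0` and lowers the degree
everywhere else. An operator that is unipotent for an exhaustive filtration is bijective:
injectivity and surjectivity both follow by induction on the filtration level.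
-/

open Function

theorem LinearMap.bijective_of_sub_mem_filtration {R M : Type*} [Ring R] [AddCommGroup M]
    [Module R M] (F : ℕ → Submodule R M) (hexh : ∀ a, ∃ n, a ∈ F n)
    (f : M →ₗ[R] M) (h0 : ∀ a ∈ F 0, f a = a) (hsucc : ∀ n, ∀ a ∈ F (n + 1), f a - a ∈ F n) :
    Bijective f := by
  have hker : ∀ n, ∀ a ∈ F n, f a = 0 → a = 0 := by
    intro n
    induction n with
    | zero => intro a ha hfa; rw [← h0 a ha, hfa]
    | succ n ih =>
      intro a ha hfa
      have ha' := hsucc n a ha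
      rw [hfa, zero_sub, neg_mem_iff] at ha'
      exact ih a ha' hfa
  have hsurj : ∀ n, ∀ b ∈ F n, ∃ a, f a = b := by
    intro n
    induction n with
    | zero => exact fun b hb ↦ ⟨b, h0 b hb⟩
    | succ n ih =>
      intro b hb
      obtain ⟨a, ha⟩ := ih _ (hsucc n b hb)
      exact ⟨b - a, by rw [map_sub, ha, sub_sub_cancel]⟩
  refine ⟨(injective_iff_map_eq_zero f).mpr fun a hfa ↦ ?_, fun b ↦ ?_⟩
  · obtain ⟨n, hn⟩ := hexh a
    exact hker n a hn hfa
  · obtain ⟨n, hn⟩ := hexh b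
    exact hsurj n b hn

namespace TensorAlgebra

variable (R M : Type*) [CommRing R] [AddCommGroup M] [Module R M]

/-- The degree filtration: `filtration R M n` is spanned by products of at most `n`
generators. -/
def filtration (n : ℕ) : Submodule R (TensorAlgebra R M) :=
  (LinearMap.range (ι R) ⊔ 1) ^ n

variable {R M}

theorem mem_filtration_zero {a : TensorAlgebra R M} :
    a ∈ filtration R M 0 ↔ ∃ c, algebraMap R _ c = a := by
  rw [filtration, pow_zero, Submodule.mem_one]

theorem filtration_succ (n : ℕ) :
    filtration R M (n + 1) = LinearMap.range (ι R) * filtration R M n ⊔ filtration R M n := by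
  unfold filtration
  rw [pow_succ', Submodule.sup_mul, Submodule.one_mul]

theorem filtration_mono : Monotone (filtration R M) :=
  monotone_nat_of_le_succ fun n ↦ by rw [filtration_succ]; exact le_sup_right

theorem ι_mul_mem_filtration_succ (x : M) {n : ℕ} {a : TensorAlgebra R M}
    (ha : a ∈ filtration R M n) : ι R x * a ∈ filtration R M (n + 1) := by
  rw [filtration_succ]; exact Submodule.mem_sup_left (Submodule.mul_mem_mul ⟨x, rfl⟩ ha)

theorem filtration_add (m n : ℕ) :
    filtration R M (m + n) = filtration R M m * filtration R M n :=
  pow_add _ m n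

theorem exists_mem_filtration (a : TensorAlgebra R M) : ∃ n, a ∈ filtration R M n := by
  induction a using TensorAlgebra.induction with
  | algebraMap c => exact ⟨0, mem_filtration_zero.mpr ⟨c, rfl⟩⟩
  | ι x =>
    have h := ι_mul_mem_filtration_succ x (mem_filtration_zero.mpr ⟨1, map_one (algebraMap R _)⟩)
    exact ⟨1, by rwa [mul_one] at h⟩
  | mul a b ha hb =>
    obtain ⟨m, hm⟩ := ha
    obtain ⟨n, hn⟩ := hb
    exact ⟨m + n, by rw [filtration_add]; exact Submodule.mul_mem_mul hm hn⟩
  | add a b ha hb =>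
    obtain ⟨m, hm⟩ := ha
    obtain ⟨n, hn⟩ := hb
    exact ⟨max m n, add_mem (filtration_mono (le_max_left m n) hm)
      (filtration_mono (le_max_right m n) hn)⟩

theorem filtration_succ_induction {n : ℕ} {P : TensorAlgebra R M → Prop}
    (hlow : ∀ a ∈ filtration R M n, P a)
    (hι_mul : ∀ (x : M), ∀ a ∈ filtration R M n, P (ι R x * a))
    (hadd : ∀ a b, P a → P b → P (a + b)) : ∀ a ∈ filtration R M (n + 1), P a := by
  intro a ha
  rw [filtration_succ] at ha
  obtain ⟨b, hb, c, hc, rfl⟩ := Submodule.mem_sup.mp ha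
  refine hadd _ _ ?_ (hlow c hc)
  clear ha
  induction hb using Submodule.mul_induction_on' with
  | mem_mul_mem r hr a ha =>
    obtain ⟨x, rfl⟩ := hr
    exact hι_mul x a ha
  | add p _ q _ hp hq => exact hadd p q hp hq

theorem map_mem_filtration_of_leibniz (D : TensorAlgebra R M →ₗ[R] TensorAlgebra R M)
    (hD : ∀ a b, D (a * b) = D a * b + a * D b) (hDι : ∀ x, D (ι R x) ∈ LinearMap.range (ι R))
    {n : ℕ} {a : TensorAlgebra R M} (ha : a ∈ filtration R M n) : D a ∈ filtration R M n := by
  induction n generalizing a with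
  | zero =>
    have hD1 : D 1 = 0 := by simpa using hD 1 1
    obtain ⟨c, rfl⟩ := mem_filtration_zero.mp ha
    rw [Algebra.algebraMap_eq_smul_one, map_smul, hD1, smul_zero]
    exact zero_mem _
  | succ n ih =>
    refine filtration_succ_induction (fun b hb ↦ filtration_mono n.le_succ (ih hb))
      (fun x b hb ↦ ?_) (fun b c hb hc ↦ map_add D b c ▸ add_mem hb hc) a ha
    obtain ⟨y, hy⟩ := hDι x
    rw [hD, ← hy]
    exact add_mem (ι_mul_mem_filtration_succ y hb) (ι_mul_mem_filtration_succ x (ih hb))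

section KOperator

variable (τ : M → TensorAlgebra R M →ₗ[R] TensorAlgebra R M)
  (hτ : ∀ x n, ∀ a ∈ filtration R M n, τ x a ∈ filtration R M n)
  (K : TensorAlgebra R M →ₗ[R] TensorAlgebra R M) (hK1 : K 1 = 1)
  (hK : ∀ x a, K (ι R x * a + τ x a) = ι R x * K a)

include hK in
theorem kOperator_ι_mul (x : M) (a : TensorAlgebra R M) :
    K (ι R x * a) = ι R x * K a - K (τ x a) := by
  rw [← hK x a, map_add, add_sub_cancel_right]

include hK1 in
theorem kOperator_eq_self_of_mem_filtration_zero {a : TensorAlgebra R M}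
    (ha : a ∈ filtration R M 0) : K a = a := by
  obtain ⟨c, rfl⟩ := mem_filtration_zero.mp ha
  rw [Algebra.algebraMap_eq_smul_one, map_smul, hK1]

include hτ hK in
/-- The hypotheses `hKF` and `hι_mul` are what the statement one level down provides. -/
theorem kOperator_sub_self_mem_filtration_succ_of {n : ℕ}
    (hKF : ∀ a ∈ filtration R M n, K a ∈ filtration R M n)
    (hι_mul : ∀ (x : M), ∀ a ∈ filtration R M n, ι R x * (K a - a) ∈ filtration R M n) :
    ∀ a ∈ filtration R M (n + 1), K a - a ∈ filtration R M n := by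
  refine filtration_succ_induction (fun a ha ↦ sub_mem (hKF a ha) ha) (fun x a ha ↦ ?_)
    (fun a b ha hb ↦ by rw [map_add, add_sub_add_comm]; exact add_mem ha hb)
  rw [kOperator_ι_mul τ K hK, sub_right_comm, ← mul_sub]
  exact sub_mem (hι_mul x a ha) (hKF _ (hτ x n a ha))

include hτ hK1 hK in
theorem kOperator_sub_self_mem_filtration (n : ℕ) :
    ∀ a ∈ filtration R M (n + 1), K a - a ∈ filtration R M n := by
  induction n with
  | zero =>
    have hK0 (a) (ha : a ∈ filtration R M 0) : K a = a :=
      kOperator_eq_self_of_mem_filtration_zero K hK1 ha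
    refine kOperator_sub_self_mem_filtration_succ_of τ hτ K hK (fun a ha ↦ (hK0 a ha).symm ▸ ha)
      fun x a ha ↦ ?_
    rw [hK0 a ha, sub_self, mul_zero]
    exact zero_mem _
  | succ n ih =>
    refine kOperator_sub_self_mem_filtration_succ_of τ hτ K hK (fun a ha ↦ ?_)
      fun x a ha ↦ ι_mul_mem_filtration_succ x (ih a ha)
    simpa using add_mem (filtration_mono n.le_succ (ih a ha)) ha

end KOperator

end TensorAlgebra

open TensorAlgebra in
theorem kOperator_bijective_general
    (k : Type*) [Field k] (g : Type*) [AddCommGroup g] [Module k g]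
    (d : g →ₗ[k] g →ₗ[k] g)
    (τ : g → TensorAlgebra k g →ₗ[k] TensorAlgebra k g)
    (hτder : ∀ (x : g) (a b : TensorAlgebra k g), τ x (a * b) = τ x a * b + a * τ x b)
    (hτι : ∀ x y : g, τ x (TensorAlgebra.ι k y) = TensorAlgebra.ι k (d x y))
    (K : TensorAlgebra k g →ₗ[k] TensorAlgebra k g)
    (hK1 : K 1 = 1)
    (hK : ∀ (x : g) (a : TensorAlgebra k g),
      K (TensorAlgebra.ι k x * a + τ x a) = TensorAlgebra.ι k x * K a) :
    Function.Bijective K := by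
  have hτ : ∀ x n, ∀ a ∈ filtration k g n, τ x a ∈ filtration k g n := fun x _ _ ha ↦
    map_mem_filtration_of_leibniz (τ x) (hτder x) (fun y ↦ ⟨d x y, (hτι x y).symm⟩) ha
  exact LinearMap.bijective_of_sub_mem_filtration (filtration k g) exists_mem_filtration K
    (fun _ ↦ kOperator_eq_self_of_mem_filtration_zero K hK1)
    (kOperator_sub_self_mem_filtration τ hτ K hK1 hK)

/-- The K-operator of a nonassociative algebra `𝔤` over a field of characteristic zero is a
bijection of `T(𝔤)`.  Here `d` is the bilinear multiplication `⋄` of `𝔤`, `τ x` is the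
derivation of `T(𝔤)` extending `y ↦ x ⋄ y`, and `K` is the (unique) linear map with
`K(1) = 1` and `K(x ⊗ a + τ_x a) = x ⊗ K(a)`. -/
theorem kOperator_bijective
    (k : Type*) [Field k] [CharZero k] (g : Type*) [AddCommGroup g] [Module k g]
    (d : g →ₗ[k] g →ₗ[k] g)
    (τ : g → TensorAlgebra k g →ₗ[k] TensorAlgebra k g)
    (hτder : ∀ (x : g) (a b : TensorAlgebra k g), τ x (a * b) = τ x a * b + a * τ x b)
    (hτι : ∀ x y : g, τ x (TensorAlgebra.ι k y) = TensorAlgebra.ι k (d x y))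
    (K : TensorAlgebra k g →ₗ[k] TensorAlgebra k g)
    (hK1 : K 1 = 1)
    (hK : ∀ (x : g) (a : TensorAlgebra k g),
      K (TensorAlgebra.ι k x * a + τ x a) = TensorAlgebra.ι k x * K a) :
    Function.Bijective K :=
  kOperator_bijective_general k g d τ hτder hτι K hK1 hK
end

section
/- Let 𝔤 be a nonassociative algebra over a field k of characteristic zero and K its K-operator on T(𝔤). Then Δ ∘ K = (K ⊗ K) ∘ Δ, where Δ is the standard comultiplication of the tensor algebra T(𝔤); i.e., K is a coalgebra automorphism of T(𝔤). -/
/-!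
Since `Δ` is an algebra map with `Δ x = x ⊗ 1 + 1 ⊗ x`, it intertwines the derivation `τ_x` of
`T(𝔤)` with the derivation `τ_x ⊗ 1 + 1 ⊗ τ_x` of `T(𝔤) ⊗ T(𝔤)`. Hence `K ⊗ K` satisfies the
defining recursion of `K` with `Δ x` in place of `x`, and since `τ_x` preserves tensor degree,
induction on the degree gives `Δ ∘ K = (K ⊗ K) ∘ Δ`.
-/

open TensorProduct

/-- The standard comultiplication of the tensor algebra `T(V)`: the unique algebra
homomorphism `T(V) → T(V) ⊗ T(V)` for which every `x ∈ V` is primitive. -/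
noncomputable def tensorAlgebraComul (k : Type*) [Field k] (V : Type*) [AddCommGroup V]
    [Module k V] :
    TensorAlgebra k V →ₐ[k] TensorAlgebra k V ⊗[k] TensorAlgebra k V :=
  TensorAlgebra.lift k
    ((TensorProduct.mk k (TensorAlgebra k V) (TensorAlgebra k V) 1).comp (TensorAlgebra.ι k)
      + ((TensorProduct.mk k (TensorAlgebra k V) (TensorAlgebra k V)).flip 1).comp
          (TensorAlgebra.ι k))

theorem tensorAlgebraComul_ι (k : Type*) [Field k] {V : Type*} [AddCommGroup V] [Module k V]
    (x : V) :
    tensorAlgebraComul k V (TensorAlgebra.ι k x)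
      = TensorAlgebra.ι k x ⊗ₜ 1 + 1 ⊗ₜ TensorAlgebra.ι k x := by
  simp [tensorAlgebraComul, add_comm]

theorem TensorAlgebra.iSup_range_ι_pow_eq_top (R : Type*) [CommSemiring R] (M : Type*)
    [AddCommMonoid M] [Module R M] :
    ⨆ n : ℕ, LinearMap.range (ι R : M →ₗ[R] TensorAlgebra R M) ^ n = ⊤ :=
  (DirectSum.Decomposition.isInternal
    (fun n : ℕ => LinearMap.range (ι R : M →ₗ[R] TensorAlgebra R M) ^ n)).submodule_iSup_eq_top

section Leibniz

variable {R A : Type*} [CommRing R] [Ring A] [Algebra R A]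

def IsLeibniz (δ : A →ₗ[R] A) : Prop :=
  ∀ a b, δ (a * b) = δ a * b + a * δ b

namespace IsLeibniz

variable {δ : A →ₗ[R] A}

theorem map_one (hδ : IsLeibniz δ) : δ 1 = 0 := by
  simpa using hδ 1 1

theorem map_algebraMap (hδ : IsLeibniz δ) (r : R) : δ (algebraMap R A r) = 0 := by
  rw [Algebra.algebraMap_eq_smul_one, map_smul, hδ.map_one, smul_zero]

theorem rTensor_add_lTensor (hδ : IsLeibniz δ) :
    IsLeibniz (δ.rTensor A + δ.lTensor A) := by
  intro u v
  induction u using TensorProduct.induction_on with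
  | zero => simp
  | add u₁ u₂ ih₁ ih₂ => simp only [add_mul, map_add, ih₁, ih₂]; abel
  | tmul a b =>
    induction v using TensorProduct.induction_on with
    | zero => simp
    | add v₁ v₂ ih₁ ih₂ => simp only [mul_add, map_add, ih₁, ih₂]; abel
    | tmul c e =>
      simp only [Algebra.TensorProduct.tmul_mul_tmul, LinearMap.add_apply,
        LinearMap.rTensor_tmul, LinearMap.lTensor_tmul, hδ a c, hδ b e, add_tmul, tmul_add,
        add_mul, mul_add]
      abel

theorem map_mem_pow (hδ : IsLeibniz δ) {M : Submodule R A} (hM : ∀ m ∈ M, δ m ∈ M) :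
    ∀ n : ℕ, ∀ a ∈ M ^ n, δ a ∈ M ^ n
  | 0, a, ha => by
    obtain ⟨r, rfl⟩ := Submodule.mem_one.mp ha
    rw [hδ.map_algebraMap]
    exact zero_mem _
  | n + 1, a, ha => by
    rw [pow_succ'] at ha ⊢
    refine Submodule.mul_induction_on ha (fun m hm b hb => ?_) fun u v hu hv => ?_
    · rw [hδ]
      exact add_mem (Submodule.mul_mem_mul (hM m hm) hb)
        (Submodule.mul_mem_mul hm (hδ.map_mem_pow hM n b hb))
    · rw [map_add]
      exact add_mem hu hv

end IsLeibniz

theorem TensorAlgebra.algHom_leibniz_comm {M B : Type*} [AddCommMonoid M] [Module R M] [Ring B]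
    [Algebra R B] (f : TensorAlgebra R M →ₐ[R] B) {δ : TensorAlgebra R M →ₗ[R] TensorAlgebra R M}
    {ε : B →ₗ[R] B} (hδ : IsLeibniz δ) (hε : IsLeibniz ε) (hι : ∀ x, f (δ (ι R x)) = ε (f (ι R x)))
    (a : TensorAlgebra R M) : f (δ a) = ε (f a) := by
  induction a using TensorAlgebra.induction with
  | algebraMap r => rw [hδ.map_algebraMap, AlgHom.commutes, hε.map_algebraMap, map_zero]
  | ι x => exact hι x
  | mul a b iha ihb => rw [hδ, map_add, map_mul, map_mul, map_mul, hε, iha, ihb]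
  | add a b iha ihb => rw [map_add, map_add, map_add, map_add, iha, ihb]

theorem TensorProduct.map_mul_add_rTensor_add_lTensor {K δ : A →ₗ[R] A} {m : A}
    (hK : ∀ a, K (m * a + δ a) = m * K a) (z : A ⊗[R] A) :
    map K K ((m ⊗ₜ 1 + 1 ⊗ₜ m) * z + (δ.rTensor A + δ.lTensor A) z)
      = (m ⊗ₜ 1 + 1 ⊗ₜ m) * map K K z := by
  induction z using TensorProduct.induction_on with
  | zero => simp
  | add u v ihu ihv =>
    rw [map_add (map K K) u v, mul_add _ (map K K u), ← ihu, ← ihv, ← map_add]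
    congr 1
    rw [mul_add, map_add]
    abel
  | tmul a b =>
    simp only [add_mul, Algebra.TensorProduct.tmul_mul_tmul, one_mul, LinearMap.add_apply,
      LinearMap.rTensor_tmul, LinearMap.lTensor_tmul, map_add, map_tmul]
    rw [← hK a, ← hK b, map_add, map_add]
    simp only [add_tmul, tmul_add]
    abel

end Leibniz

theorem kOperator_comul_comm_general
    (k : Type*) [Field k] (g : Type*) [AddCommGroup g] [Module k g]
    (d : g →ₗ[k] g →ₗ[k] g)
    (τ : g → TensorAlgebra k g →ₗ[k] TensorAlgebra k g)
    (hτder : ∀ (x : g) (a b : TensorAlgebra k g), τ x (a * b) = τ x a * b + a * τ x b)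
    (hτι : ∀ x y : g, τ x (TensorAlgebra.ι k y) = TensorAlgebra.ι k (d x y))
    (K : TensorAlgebra k g →ₗ[k] TensorAlgebra k g)
    (hK1 : K 1 = 1)
    (hK : ∀ (x : g) (a : TensorAlgebra k g),
      K (TensorAlgebra.ι k x * a + τ x a) = TensorAlgebra.ι k x * K a)
    (a : TensorAlgebra k g) :
    tensorAlgebraComul k g (K a) = TensorProduct.map K K (tensorAlgebraComul k g a) := by
  set Δ := tensorAlgebraComul k g
  have hτ (x : g) : IsLeibniz (τ x) := hτder x
  set V := LinearMap.range (TensorAlgebra.ι k : g →ₗ[k] TensorAlgebra k g)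
  have hτV (x : g) : ∀ n, ∀ b ∈ V ^ n, τ x b ∈ V ^ n :=
    (hτ x).map_mem_pow <| by rintro _ ⟨y, rfl⟩; exact hτι x y ▸ LinearMap.mem_range_self _ _
  have hΔτ (x : g) (b : TensorAlgebra k g) :
      Δ (τ x b) = ((τ x).rTensor (TensorAlgebra k g) + (τ x).lTensor (TensorAlgebra k g)) (Δ b) :=
    TensorAlgebra.algHom_leibniz_comm Δ (hτ x) (hτ x).rTensor_add_lTensor (fun y => by
      simp [Δ, hτι, tensorAlgebraComul_ι, (hτ x).map_one]) b
  have hV (n : ℕ) :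
      V ^ n ≤ LinearMap.eqLocus (Δ.toLinearMap ∘ₗ K) (map K K ∘ₗ Δ.toLinearMap) := by
    induction n with
    | zero => exact Submodule.one_le.mpr (by simp [hK1, Algebra.TensorProduct.one_def])
    | succ n ih =>
      rw [pow_succ', Submodule.mul_le]
      rintro _ ⟨x, rfl⟩ b hb
      have hKb : Δ (K b) = map K K (Δ b) := ih hb
      have hKτb : Δ (K (τ x b)) = map K K (Δ (τ x b)) := ih (hτV x n b hb)
      have hKι : K (TensorAlgebra.ι k x * b) = TensorAlgebra.ι k x * K b - K (τ x b) :=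
        eq_sub_of_add_eq ((map_add K _ _).symm.trans (hK x b))
      show Δ (K _) = map K K (Δ _)
      rw [hKι, map_sub, map_mul, hKb, hKτb, hΔτ, map_mul, tensorAlgebraComul_ι,
        ← map_mul_add_rTensor_add_lTensor (hK x), map_add, add_sub_cancel_right]
  exact (TensorAlgebra.iSup_range_ι_pow_eq_top k g ▸ iSup_le hV) Submodule.mem_top

/-- Proposition 1: the K-operator of a nonassociative algebra `𝔤` over a field of
characteristic zero is a coalgebra automorphism of `T(𝔤)`: `Δ ∘ K = (K ⊗ K) ∘ Δ`. -/
theorem kOperator_comul_comm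
    (k : Type*) [Field k] [CharZero k] (g : Type*) [AddCommGroup g] [Module k g]
    (d : g →ₗ[k] g →ₗ[k] g)
    (τ : g → TensorAlgebra k g →ₗ[k] TensorAlgebra k g)
    (hτder : ∀ (x : g) (a b : TensorAlgebra k g), τ x (a * b) = τ x a * b + a * τ x b)
    (hτι : ∀ x y : g, τ x (TensorAlgebra.ι k y) = TensorAlgebra.ι k (d x y))
    (K : TensorAlgebra k g →ₗ[k] TensorAlgebra k g)
    (hK1 : K 1 = 1)
    (hK : ∀ (x : g) (a : TensorAlgebra k g),
      K (TensorAlgebra.ι k x * a + τ x a) = TensorAlgebra.ι k x * K a)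
    (a : TensorAlgebra k g) :
    tensorAlgebraComul k g (K a) = TensorProduct.map K K (tensorAlgebraComul k g a) :=
  kOperator_comul_comm_general k g d τ hτder hτι K hK1 hK a
end

section
/- Let 𝔤 be a nonassociative algebra over a field k of characteristic zero, and let τ: T(𝔤) → End_k(T(𝔤)) be the algebra homomorphism determined by τ(x) = τ_x for x ∈ 𝔤, where τ_x is the derivation of T(𝔤) extending left multiplication y ↦ x ⋄ y. Then for all a, b1, b2 ∈ T(𝔤): τ(a)(b1 ⊗ b2) = Σ_{(a)} (τ(a_{(1)}) b1) ⊗ (τ(a_{(2)}) b2), where Δ(a) = Σ_{(a)} a_{(1)} ⊗ a_{(2)} is the standard comultiplication. -/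
open TensorProduct

section Intertwining

variable {R H X Y : Type*} [CommSemiring R] [Semiring H] [Algebra R H]
  [AddCommMonoid X] [Module R X] [AddCommMonoid Y] [Module R Y]

def intertwiningSubalgebra (p : H →ₐ[R] Module.End R Y) (q : H →ₐ[R] Module.End R X)
    (m : X →ₗ[R] Y) : Subalgebra R H where
  carrier := {a | p a ∘ₗ m = m ∘ₗ q a}
  mul_mem' {a₁ a₂} (h₁ : p a₁ ∘ₗ m = m ∘ₗ q a₁) (h₂ : p a₂ ∘ₗ m = m ∘ₗ q a₂) :=
    show p (a₁ * a₂) ∘ₗ m = m ∘ₗ q (a₁ * a₂) by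
      simp only [map_mul, Module.End.mul_eq_comp]
      rw [LinearMap.comp_assoc, h₂, ← LinearMap.comp_assoc, h₁, LinearMap.comp_assoc]
  add_mem' {a₁ a₂} (h₁ : p a₁ ∘ₗ m = m ∘ₗ q a₁) (h₂ : p a₂ ∘ₗ m = m ∘ₗ q a₂) :=
    show p (a₁ + a₂) ∘ₗ m = m ∘ₗ q (a₁ + a₂) by
      rw [map_add, map_add, LinearMap.add_comp, LinearMap.comp_add, h₁, h₂]
  algebraMap_mem' r := by
    ext x
    simp [Module.algebraMap_end_apply]

theorem mem_intertwiningSubalgebra {p : H →ₐ[R] Module.End R Y} {q : H →ₐ[R] Module.End R X}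
    {m : X →ₗ[R] Y} {a : H} : a ∈ intertwiningSubalgebra p q m ↔ p a ∘ₗ m = m ∘ₗ q a :=
  Iff.rfl

end Intertwining

section Measuring

variable {R H A : Type*} [CommSemiring R] [Semiring H] [Algebra R H] [Semiring A] [Algebra R A]

noncomputable def tensorAction (φ : H →ₐ[R] Module.End R A) (Δ : H →ₐ[R] H ⊗[R] H) :
    H →ₐ[R] Module.End R (A ⊗[R] A) :=
  Module.endTensorEndAlgHom.comp ((Algebra.TensorProduct.map φ φ).comp Δ)

theorem mem_intertwiningSubalgebra_mul'_of_primitive {φ : H →ₐ[R] Module.End R A}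
    {Δ : H →ₐ[R] H ⊗[R] H} {a : H} (hΔ : Δ a = a ⊗ₜ 1 + 1 ⊗ₜ a)
    (hder : ∀ b c : A, φ a (b * c) = φ a b * c + b * φ a c) :
    a ∈ intertwiningSubalgebra φ (tensorAction φ Δ) (LinearMap.mul' R A) := by
  refine TensorProduct.ext' fun b c => ?_
  simp [tensorAction, hΔ, Module.endTensorEndAlgHom_apply, hder]

theorem homTensorHomMap_map_eq_endTensorEndAlgHom (φ : H →ₐ[R] Module.End R A)
    (x : H ⊗[R] H) :
    homTensorHomMap (RingHom.id R) A A A A (map φ.toLinearMap φ.toLinearMap x) =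
      Module.endTensorEndAlgHom (S := R) (A := R) (Algebra.TensorProduct.map φ φ x) := by
  induction x using TensorProduct.induction_on with
  | zero => simp only [map_zero]
  | tmul _ _ => rfl
  | add x y hx hy => simp only [map_add, hx, hy]

end Measuring

theorem tensorAlgebra_measuring {k V A : Type*} [Field k] [AddCommGroup V] [Module k V]
    [Semiring A] [Algebra k A] (τ : TensorAlgebra k V →ₐ[k] Module.End k A)
    (hder : ∀ (x : V) (b c : A), τ (TensorAlgebra.ι k x) (b * c) =
      τ (TensorAlgebra.ι k x) b * c + b * τ (TensorAlgebra.ι k x) c)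
    (a : TensorAlgebra k V) :
    τ a ∘ₗ LinearMap.mul' k A =
      LinearMap.mul' k A ∘ₗ tensorAction τ (tensorAlgebraComul k V) a := by
  suffices intertwiningSubalgebra τ (tensorAction τ (tensorAlgebraComul k V))
      (LinearMap.mul' k A) = ⊤ by
    exact mem_intertwiningSubalgebra.mp (this ▸ Algebra.mem_top)
  rw [eq_top_iff, ← TensorAlgebra.adjoin_range_ι, Algebra.adjoin_le_iff]
  rintro _ ⟨x, rfl⟩
  exact mem_intertwiningSubalgebra_mul'_of_primitive (tensorAlgebraComul_ι k x) (hder x)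

theorem tau_measures_multiplication_general
    (k : Type*) [Field k] (g : Type*) [AddCommGroup g] [Module k g]
    (τ : TensorAlgebra k g →ₐ[k] Module.End k (TensorAlgebra k g))
    (hτder : ∀ (x : g) (a b : TensorAlgebra k g),
      τ (TensorAlgebra.ι k x) (a * b) =
        τ (TensorAlgebra.ι k x) a * b + a * τ (TensorAlgebra.ι k x) b)
    (a b₁ b₂ : TensorAlgebra k g) :
    τ a (b₁ * b₂) =
      LinearMap.mul' k (TensorAlgebra k g)
        ((TensorProduct.homTensorHomMap (RingHom.id k) (TensorAlgebra k g) (TensorAlgebra k g)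
            (TensorAlgebra k g) (TensorAlgebra k g)
            ((TensorProduct.map τ.toLinearMap τ.toLinearMap) (tensorAlgebraComul k g a)))
          (b₁ ⊗ₜ[k] b₂)) := by
  rw [homTensorHomMap_map_eq_endTensorEndAlgHom]
  exact LinearMap.congr_fun (tensorAlgebra_measuring τ hτder a) (b₁ ⊗ₜ b₂)

/-- Measuring property of `τ` (right square of Proposition 2): for the algebra homomorphism
`τ : T(𝔤) → End(T(𝔤))` with `τ(x) = τ_x` (the derivation extending left `⋄`-multiplication
by `x`), one has `τ(a)(b₁ ⊗ b₂) = Σ_{(a)} (τ(a₍₁₎) b₁) ⊗ (τ(a₍₂₎) b₂)` for all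
`a, b₁, b₂ ∈ T(𝔤)`, where `Δ(a) = Σ_{(a)} a₍₁₎ ⊗ a₍₂₎` is the standard comultiplication. -/
theorem tau_measures_multiplication
    (k : Type*) [Field k] [CharZero k] (g : Type*) [AddCommGroup g] [Module k g]
    (d : g →ₗ[k] g →ₗ[k] g)
    (τ : TensorAlgebra k g →ₐ[k] Module.End k (TensorAlgebra k g))
    (hτder : ∀ (x : g) (a b : TensorAlgebra k g),
      τ (TensorAlgebra.ι k x) (a * b) =
        τ (TensorAlgebra.ι k x) a * b + a * τ (TensorAlgebra.ι k x) b)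
    (hτι : ∀ x y : g,
      τ (TensorAlgebra.ι k x) (TensorAlgebra.ι k y) = TensorAlgebra.ι k (d x y))
    (a b₁ b₂ : TensorAlgebra k g) :
    τ a (b₁ * b₂) =
      LinearMap.mul' k (TensorAlgebra k g)
        ((TensorProduct.homTensorHomMap (RingHom.id k) (TensorAlgebra k g) (TensorAlgebra k g)
            (TensorAlgebra k g) (TensorAlgebra k g)
            ((TensorProduct.map τ.toLinearMap τ.toLinearMap) (tensorAlgebraComul k g a)))
          (b₁ ⊗ₜ[k] b₂)) :=
  tau_measures_multiplication_general k g τ hτder a b₁ b₂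
end

section
/- With 𝔤, τ, Δ as above, for every a, b ∈ T(𝔤): Δ(τ(a) b) = Σ_{(a)} Σ_{(b)} (τ(a_{(1)}) b_{(1)}) ⊗ (τ(a_{(2)}) b_{(2)}); i.e., the action of T(𝔤) on itself via τ is compatible with the comultiplication (the left square of Proposition 2). -/
/-!
For `x ∈ 𝔤`, both `Δ ∘ τ_x` and `(τ_x ⊗ 1 + 1 ⊗ τ_x) ∘ Δ` satisfy the Leibniz rule relative to
`Δ`, and they agree on `𝔤` because `τ_x` maps `𝔤` into `𝔤`, whose elements are primitive; so they
agree on all of `T(𝔤)`. Since `a ↦ (τ ⊗ τ)(Δ a)` is an algebra map into `End(T(𝔤) ⊗ T(𝔤))`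
sending `x` to `τ_x ⊗ 1 + 1 ⊗ τ_x`, the elements `a` satisfying the identity form a subalgebra
containing `𝔤`.
-/

open TensorProduct

section TensorSquare

variable {R A B : Type*} [CommSemiring R] [Semiring A] [Algebra R A] [Semiring B] [Algebra R B]

theorem rTensor_add_lTensor_apply_mul {f : A →ₗ[R] A} {h : B →ₗ[R] B}
    (hf : ∀ p q, f (p * q) = f p * q + p * f q) (hh : ∀ p q, h (p * q) = h p * q + p * h q)
    (u v : A ⊗[R] B) :
    (f.rTensor B + h.lTensor A) (u * v) =
      (f.rTensor B + h.lTensor A) u * v + u * (f.rTensor B + h.lTensor A) v := by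
  induction u using TensorProduct.induction_on with
  | zero => simp
  | add u₁ u₂ h₁ h₂ => simp only [add_mul, map_add, h₁, h₂]; abel
  | tmul a b =>
    induction v using TensorProduct.induction_on with
    | zero => simp
    | add v₁ v₂ h₁ h₂ => simp only [mul_add, map_add, h₁, h₂]; abel
    | tmul a' b' =>
      simp only [Algebra.TensorProduct.tmul_mul_tmul, LinearMap.add_apply,
        LinearMap.rTensor_tmul, LinearMap.lTensor_tmul, hf, hh, add_tmul, tmul_add,
        add_mul, mul_add]
      abel

theorem endTensorEndAlgHom_map_one_tmul_add_tmul_one {M N : Type*} [AddCommMonoid M]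
    [Module R M] [AddCommMonoid N] [Module R N] (ρ : A →ₐ[R] Module.End R M)
    (σ : A →ₐ[R] Module.End R N) (a : A) :
    Module.endTensorEndAlgHom (S := R) (A := R)
        (Algebra.TensorProduct.map ρ σ (1 ⊗ₜ a + a ⊗ₜ 1)) =
      (ρ a).rTensor N + (σ a).lTensor M := by
  ext m n
  simp [Module.endTensorEndAlgHom_apply, add_comm]

end TensorSquare

section Comul

variable {k : Type*} [Field k] {g : Type*} [AddCommGroup g] [Module k g]

local notation "Δ" => tensorAlgebraComul k g

theorem tensorAlgebraComul_ι_s9 (x : g) :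
    Δ (TensorAlgebra.ι k x) = 1 ⊗ₜ TensorAlgebra.ι k x + TensorAlgebra.ι k x ⊗ₜ 1 := by
  simp [tensorAlgebraComul]

theorem tensorAlgebraComul_apply_of_leibniz {δ : TensorAlgebra k g →ₗ[k] TensorAlgebra k g}
    (hδ : ∀ p q, δ (p * q) = δ p * q + p * δ q)
    (hδι : ∀ y, ∃ z, δ (TensorAlgebra.ι k y) = TensorAlgebra.ι k z) (b : TensorAlgebra k g) :
    Δ (δ b) = (δ.rTensor (TensorAlgebra k g) + δ.lTensor (TensorAlgebra k g)) (Δ b) := by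
  have hδ1 : δ 1 = 0 := by simpa using hδ 1 1
  induction b using TensorAlgebra.induction with
  | algebraMap r => simp [Algebra.algebraMap_eq_smul_one, Algebra.TensorProduct.one_def, hδ1]
  | ι y =>
    obtain ⟨z, hz⟩ := hδι y
    simp [hz, tensorAlgebraComul_ι_s9, hδ1, add_comm]
  | mul p q hp hq =>
    rw [hδ, map_add, map_mul, map_mul, hp, hq, map_mul, rTensor_add_lTensor_apply_mul hδ hδ]
  | add p q hp hq => simp only [map_add, hp, hq]

theorem tensorAlgebraComul_apply_of_ι
    (τ : TensorAlgebra k g →ₐ[k] Module.End k (TensorAlgebra k g))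
    (hτ : ∀ x b, Δ (τ (TensorAlgebra.ι k x) b) =
      ((τ (TensorAlgebra.ι k x)).rTensor (TensorAlgebra k g) +
        (τ (TensorAlgebra.ι k x)).lTensor (TensorAlgebra k g)) (Δ b))
    (a b : TensorAlgebra k g) :
    Δ (τ a b) =
      Module.endTensorEndAlgHom (S := k) (A := k) (Algebra.TensorProduct.map τ τ (Δ a)) (Δ b) := by
  induction a using TensorAlgebra.induction generalizing b with
  | algebraMap r => simp [Algebra.algebraMap_eq_smul_one]
  | ι x => rw [hτ, tensorAlgebraComul_ι_s9, endTensorEndAlgHom_map_one_tmul_add_tmul_one]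
  | mul p q hp hq => simp only [map_mul, Module.End.mul_apply, hp, hq]
  | add p q hp hq => simp only [map_add, LinearMap.add_apply, hp, hq]

end Comul

theorem tau_compatible_with_comul_general
    (k : Type*) [Field k] (g : Type*) [AddCommGroup g] [Module k g]
    (d : g →ₗ[k] g →ₗ[k] g)
    (τ : TensorAlgebra k g →ₐ[k] Module.End k (TensorAlgebra k g))
    (hτder : ∀ (x : g) (a b : TensorAlgebra k g),
      τ (TensorAlgebra.ι k x) (a * b) =
        τ (TensorAlgebra.ι k x) a * b + a * τ (TensorAlgebra.ι k x) b)
    (hτι : ∀ x y : g,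
      τ (TensorAlgebra.ι k x) (TensorAlgebra.ι k y) = TensorAlgebra.ι k (d x y))
    (a b : TensorAlgebra k g) :
    tensorAlgebraComul k g (τ a b) =
      (TensorProduct.homTensorHomMap (RingHom.id k) (TensorAlgebra k g) (TensorAlgebra k g)
          (TensorAlgebra k g) (TensorAlgebra k g)
          ((TensorProduct.map τ.toLinearMap τ.toLinearMap) (tensorAlgebraComul k g a)))
        (tensorAlgebraComul k g b) :=
  tensorAlgebraComul_apply_of_ι τ
    (fun x => tensorAlgebraComul_apply_of_leibniz (hτder x) fun y => ⟨d x y, hτι x y⟩) a b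

/-- Left square of Proposition 2: for the algebra homomorphism `τ : T(𝔤) → End(T(𝔤))` with
`τ(x) = τ_x`, the action of `T(𝔤)` on itself via `τ` is compatible with the comultiplication:
`Δ(τ(a) b) = Σ_{(a)} Σ_{(b)} (τ(a₍₁₎) b₍₁₎) ⊗ (τ(a₍₂₎) b₍₂₎)`. -/
theorem tau_compatible_with_comul
    (k : Type*) [Field k] [CharZero k] (g : Type*) [AddCommGroup g] [Module k g]
    (d : g →ₗ[k] g →ₗ[k] g)
    (τ : TensorAlgebra k g →ₐ[k] Module.End k (TensorAlgebra k g))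
    (hτder : ∀ (x : g) (a b : TensorAlgebra k g),
      τ (TensorAlgebra.ι k x) (a * b) =
        τ (TensorAlgebra.ι k x) a * b + a * τ (TensorAlgebra.ι k x) b)
    (hτι : ∀ x y : g,
      τ (TensorAlgebra.ι k x) (TensorAlgebra.ι k y) = TensorAlgebra.ι k (d x y))
    (a b : TensorAlgebra k g) :
    tensorAlgebraComul k g (τ a b) =
      (TensorProduct.homTensorHomMap (RingHom.id k) (TensorAlgebra k g) (TensorAlgebra k g)
          (TensorAlgebra k g) (TensorAlgebra k g)
          ((TensorProduct.map τ.toLinearMap τ.toLinearMap) (tensorAlgebraComul k g a)))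
        (tensorAlgebraComul k g b) :=
  tau_compatible_with_comul_general k g d τ hτder hτι a b
end

section
/- If v, w are vector fields on a manifold with an affine connection such that ∇_v v = 0 and ∇_v w = 0, then μ_E(v^{⊗k}) = ∇_v^k for every k > 0 on any vector bundle E with connection; in particular μ_T(v^{⊗k})(v^{⊗(l−1)} ⊗ q₂(v)w ⊗ v^{⊗(m−l)}) = v^{⊗(l−1)} ⊗ q_{k+2}(v)w ⊗ v^{⊗(m−l)}, where q_n(v)w = (v^{⊗(n−2)} · ∇^{n−2} R)(w,v)v. -/
/-!
Along `v` every correction term of the higher covariant derivative vanishes: the term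
`∇^{n}u(…, ∇_v v, …)` carries the zero vector `∇_v v` in one slot, and a contracted iterated
covariant derivative is zero as soon as one slot is zero. Hence `μ_E(v^{⊗k}) = ∇_v^k`. For the
same reason, with `∇_v w = 0` also the slot terms of `∇^{k}R(v,…,v; w, v, v)` drop out, so
`q_{k+2}(v)w = ∇_v^k (q₂(v)w)`; and on `v ⊗ ⋯ ⊗ q ⊗ ⋯ ⊗ v` the Leibniz rule for `∇_v` only
differentiates the factor `q`.
-/

open TensorProduct PiTensorProduct

/-- Iterated ("higher") covariant derivative contracted with vector fields (the operator
`μ_E(v₁ ⊗ ⋯ ⊗ vₙ)`-style contraction `(∇ⁿ u)(v₁,…,vₙ)`). -/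
def covIter {V S : Type*} [AddCommGroup S] (conn : V → S → S) (aconn : V → V → V) :
    (n : ℕ) → S → (Fin n → V) → S
  | 0, u, _ => u
  | n + 1, u, w =>
      conn (w 0) (covIter conn aconn n u fun i => w i.succ) -
        ∑ i : Fin n,
          covIter conn aconn n u
            (Function.update (fun j : Fin n => w j.succ) i (aconn (w 0) (w i.succ)))

/-- Iterated covariant derivative of a `(1,3)`-tensor field (such as a curvature tensor),
contracted with vector fields: `derTensor aconn n T (w₁,…,wₙ) (u₁,u₂,u₃) = (∇ⁿT)(w; u)`. -/
def derTensor {V : Type*} [AddCommGroup V] (aconn : V → V → V) :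
    (n : ℕ) → ((Fin 3 → V) → V) → (Fin n → V) → (Fin 3 → V) → V
  | 0, T, _, vs => T vs
  | n + 1, T, w, vs =>
      aconn (w 0) (derTensor aconn n T (fun i => w i.succ) vs) -
        (∑ i : Fin n,
          derTensor aconn n T
            (Function.update (fun j : Fin n => w j.succ) i (aconn (w 0) (w i.succ))) vs) -
        ∑ j : Fin 3,
          derTensor aconn n T (fun i => w i.succ) (Function.update vs j (aconn (w 0) (vs j)))

/-- The curvature tensor `R(u,v)w = ∇_u ∇_v w − ∇_v ∇_u w − ∇_{[u,v]} w` of an affine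
connection `C` with Lie bracket `B`, as a `(1,3)`-tensor. -/
def curvTensor {V : Type*} [AddCommGroup V] (C : V → V → V) (B : V → V → V) : (Fin 3 → V) → V :=
  fun vs => C (vs 0) (C (vs 1) (vs 2)) - C (vs 1) (C (vs 0) (vs 2)) - C (B (vs 0) (vs 1)) (vs 2)

theorem Function.update_apply_eq_zero {ι M : Type*} [DecidableEq ι] [Zero M] {f : ι → M}
    {i j : ι} {b : M} (hf : f j = 0) (hb : j = i → b = 0) : Function.update f i b j = 0 := by
  rw [Function.update_apply]
  split_ifs with h
  exacts [hb h, hf]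

section covIter

variable {V S : Type*} [Zero V] [AddCommGroup S] {conn : V → S → S} {aconn : V → V → V}

theorem covIter_eq_zero_of_apply_eq_zero (hconn₁ : ∀ u, conn 0 u = 0)
    (hconn₂ : ∀ x, conn x 0 = 0) (haconn₁ : ∀ x, aconn 0 x = 0) (haconn₂ : ∀ x, aconn x 0 = 0) :
    ∀ {n : ℕ} (u : S) (w : Fin n → V) (i : Fin n), w i = 0 → covIter conn aconn n u w = 0
  | n + 1, u, w, i, hi => by
    have ih := covIter_eq_zero_of_apply_eq_zero (n := n) hconn₁ hconn₂ haconn₁ haconn₂ u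
    rw [covIter]
    cases i using Fin.cases with
    | zero =>
      rw [hi, hconn₁, zero_sub, neg_eq_zero]
      exact Finset.sum_eq_zero fun i' _ => ih _ i' (by rw [Function.update_self, haconn₁])
    | succ j =>
      rw [ih _ j hi, hconn₂, zero_sub, neg_eq_zero]
      exact Finset.sum_eq_zero fun i' _ =>
        ih _ j (Function.update_apply_eq_zero hi fun h => by rw [← h, hi, haconn₂])

theorem covIter_const_eq_iterate (hconn₁ : ∀ u, conn 0 u = 0) (hconn₂ : ∀ x, conn x 0 = 0)
    (haconn₁ : ∀ x, aconn 0 x = 0) (haconn₂ : ∀ x, aconn x 0 = 0) {v : V}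
    (hv : aconn v v = 0) (k : ℕ) (u : S) :
    covIter conn aconn k u (fun _ => v) = (conn v)^[k] u := by
  induction k with
  | zero => rfl
  | succ k ih =>
    have hcorrection (i : Fin k) :
        covIter conn aconn k u (Function.update (fun _ => v) i (aconn v v)) = 0 :=
      covIter_eq_zero_of_apply_eq_zero hconn₁ hconn₂ haconn₁ haconn₂ u _ i (by simp [hv])
    rw [covIter, Finset.sum_eq_zero fun i _ => hcorrection i, sub_zero, ih,
      Function.iterate_succ_apply']

end covIter

section derTensor

variable {V : Type*} [AddCommGroup V] {aconn : V → V → V} {T : (Fin 3 → V) → V}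

theorem derTensor_eq_zero_of_arg_eq_zero (haconn₂ : ∀ x, aconn x 0 = 0)
    (hT : ∀ vs : Fin 3 → V, ∀ j, vs j = 0 → T vs = 0) :
    ∀ {n : ℕ} (w : Fin n → V) {vs : Fin 3 → V} (j : Fin 3), vs j = 0 →
      derTensor aconn n T w vs = 0
  | 0, _, vs, j, hj => hT vs j hj
  | n + 1, w, vs, j, hj => by
    have ih := derTensor_eq_zero_of_arg_eq_zero (n := n) haconn₂ hT
    rw [derTensor, ih _ j hj, haconn₂, Finset.sum_eq_zero fun i _ => ih _ j hj, sub_zero,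
      zero_sub, neg_eq_zero]
    exact Finset.sum_eq_zero fun j' _ =>
      ih _ j (Function.update_apply_eq_zero hj fun h => by rw [← h, hj, haconn₂])

theorem derTensor_eq_zero_of_dir_eq_zero (haconn₁ : ∀ x, aconn 0 x = 0)
    (haconn₂ : ∀ x, aconn x 0 = 0) (hT : ∀ vs : Fin 3 → V, ∀ j, vs j = 0 → T vs = 0) :
    ∀ {n : ℕ} (w : Fin n → V) (vs : Fin 3 → V) (i : Fin n), w i = 0 →
      derTensor aconn n T w vs = 0
  | n + 1, w, vs, i, hi => by
    have ih := derTensor_eq_zero_of_dir_eq_zero (n := n) haconn₁ haconn₂ hT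
    rw [derTensor]
    cases i using Fin.cases with
    | zero =>
      rw [hi, haconn₁, zero_sub,
        Finset.sum_eq_zero fun i' _ => ih _ vs i' (by rw [Function.update_self, haconn₁]),
        Finset.sum_eq_zero fun j _ => derTensor_eq_zero_of_arg_eq_zero haconn₂ hT _ j
          (by rw [Function.update_self, haconn₁]),
        sub_zero, neg_zero]
    | succ j =>
      rw [ih _ vs j hi, haconn₂,
        Finset.sum_eq_zero fun i' _ => ih _ vs j
          (Function.update_apply_eq_zero hi fun h => by rw [← h, hi, haconn₂]),
        Finset.sum_eq_zero fun j' _ => ih _ _ j hi, sub_zero, sub_zero]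

theorem derTensor_const_eq_iterate (haconn₁ : ∀ x, aconn 0 x = 0)
    (haconn₂ : ∀ x, aconn x 0 = 0) (hT : ∀ vs : Fin 3 → V, ∀ j, vs j = 0 → T vs = 0)
    {v : V} (hv : aconn v v = 0) {vs : Fin 3 → V} (hvs : ∀ j, aconn v (vs j) = 0) (k : ℕ) :
    derTensor aconn k T (fun _ => v) vs = (aconn v)^[k] (T vs) := by
  induction k with
  | zero => rfl
  | succ k ih =>
    rw [derTensor, ih,
      Finset.sum_eq_zero fun i _ => derTensor_eq_zero_of_dir_eq_zero haconn₁ haconn₂ hT _ vs i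
        (by rw [Function.update_self, hv]),
      Finset.sum_eq_zero fun j _ => derTensor_eq_zero_of_arg_eq_zero haconn₂ hT _ j
        (by rw [Function.update_self, hvs]),
      sub_zero, sub_zero, Function.iterate_succ_apply']

end derTensor

theorem curvTensor_eq_zero_of_apply_eq_zero {V : Type*} [AddCommGroup V] {C B : V → V → V}
    (hC₁ : ∀ x, C 0 x = 0) (hC₂ : ∀ x, C x 0 = 0) (hB₁ : ∀ x, B 0 x = 0)
    (hB₂ : ∀ x, B x 0 = 0) (vs : Fin 3 → V) (j : Fin 3) (hj : vs j = 0) :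
    curvTensor C B vs = 0 := by
  fin_cases j <;> simp_all [curvTensor]

section tprod

variable {A V : Type*} [CommRing A] [AddCommGroup V] [Module A V] {m : ℕ}
  {Ct : V → (⨂[A] (_ : Fin m), V) → ⨂[A] (_ : Fin m), V} {Ca : V → V → V}

theorem conn_tprod_update_const
    (htprod : ∀ (v' : V) (u : Fin m → V),
      Ct v' (tprod A u) = ∑ i : Fin m, tprod A (Function.update u i (Ca v' (u i))))
    {v : V} (hv : Ca v v = 0) (p : Fin m) (x : V) :
    Ct v (tprod A (Function.update (fun _ => v) p x)) =
      tprod A (Function.update (fun _ => v) p (Ca v x)) := by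
  rw [htprod, Finset.sum_eq_single p (fun i _ hip => ?_) (by simp), Function.update_self,
    Function.update_idem]
  rw [Function.update_of_ne hip, hv]
  exact MultilinearMap.map_update_zero _ _ _

theorem iterate_conn_tprod_update_const
    (htprod : ∀ (v' : V) (u : Fin m → V),
      Ct v' (tprod A u) = ∑ i : Fin m, tprod A (Function.update u i (Ca v' (u i))))
    {v : V} (hv : Ca v v = 0) (p : Fin m) (k : ℕ) (x : V) :
    (Ct v)^[k] (tprod A (Function.update (fun _ => v) p x)) =
      tprod A (Function.update (fun _ => v) p ((Ca v)^[k] x)) :=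
  ((Function.Semiconj.iterate_right (f := fun x => tprod A (Function.update (fun _ => v) p x))
    (fun x => (conn_tprod_update_const htprod hv p x).symm) k) x).symm

end tprod

/-- `⨂[A] (_ : Fin m), V` models `Γ(T^m M)` with induced connection `Ct`, and
`derTensor Ca k (curvTensor Ca B) (fun _ => v) ![w, v, v]` is `q_{k+2}(v)w`. -/
theorem parallel_fields_covariant_power_general
    (A : Type*) [CommRing A]
    (V : Type*) [AddCommGroup V] [Module A V]
    (B : V → V → V)
    -- the affine connection on vector fields
    (Ca : V → V → V)
    (hCav : ∀ v w u, Ca (v + w) u = Ca v u + Ca w u)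
    (hCaadd : ∀ v u u', Ca v (u + u') = Ca v u + Ca v u')
    (htorsion : ∀ u v, Ca u v - Ca v u = B u v)
    -- an arbitrary vector bundle with connection
    (S : Type*) [AddCommGroup S]
    (Cs : V → S → S)
    (hsv : ∀ v w u, Cs (v + w) u = Cs v u + Cs w u)
    (hsadd : ∀ v u u', Cs v (u + u') = Cs v u + Cs v u')
    -- the induced connection on the `m`-th contravariant tensor bundle
    (m : ℕ)
    (Ct : V → (⨂[A] (_ : Fin m), V) → (⨂[A] (_ : Fin m), V))
    (htv : ∀ v w u, Ct (v + w) u = Ct v u + Ct w u)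
    (htadd : ∀ v u u', Ct v (u + u') = Ct v u + Ct v u')
    (htprod : ∀ (v' : V) (u : Fin m → V),
      Ct v' (tprod A u) = ∑ i : Fin m, tprod A (Function.update u i (Ca v' (u i))))
    -- `v` has geodesic integral curves and `w` is parallel along them
    (v w : V) (hv : Ca v v = 0) (hw : Ca v w = 0) :
    (∀ k : ℕ, 0 < k → ∀ u : S,
        covIter Cs Ca k u (fun _ => v) = (fun s => Cs v s)^[k] u) ∧
    (∀ (k : ℕ) (p : Fin m),
        covIter Ct Ca k
            (tprod A fun i =>
              if i = p then derTensor Ca 0 (curvTensor Ca B) (fun _ => v) ![w, v, v] else v)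
            (fun _ => v) =
          tprod A fun i =>
            if i = p then derTensor Ca k (curvTensor Ca B) (fun _ => v) ![w, v, v] else v) := by
  have hCa₁ u : Ca 0 u = 0 := (AddMonoidHom.mk' (Ca · u) (hCav · · u)).map_zero
  have hCa₂ x : Ca x 0 = 0 := (AddMonoidHom.mk' (Ca x) (hCaadd x)).map_zero
  have hCs₁ u : Cs 0 u = 0 := (AddMonoidHom.mk' (Cs · u) (hsv · · u)).map_zero
  have hCs₂ x : Cs x 0 = 0 := (AddMonoidHom.mk' (Cs x) (hsadd x)).map_zero
  have hCt₁ u : Ct 0 u = 0 := (AddMonoidHom.mk' (Ct · u) (htv · · u)).map_zero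
  have hCt₂ x : Ct x 0 = 0 := (AddMonoidHom.mk' (Ct x) (htadd x)).map_zero
  have hB₁ x : B 0 x = 0 := by rw [← htorsion, hCa₁, hCa₂, sub_zero]
  have hB₂ x : B x 0 = 0 := by rw [← htorsion, hCa₁, hCa₂, sub_zero]
  refine ⟨fun k _ u => covIter_const_eq_iterate hCs₁ hCs₂ hCa₁ hCa₂ hv k u, fun k p => ?_⟩
  have hvs : ∀ j, Ca v (![w, v, v] j) = 0 := by
    intro j
    fin_cases j <;> simp [hv, hw]
  have hq := derTensor_const_eq_iterate hCa₁ hCa₂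
    (curvTensor_eq_zero_of_apply_eq_zero hCa₁ hCa₂ hB₁ hB₂) hv hvs
  have hite x : (fun i => if i = p then x else v) = Function.update (fun _ => v) p x :=
    funext fun i => (Function.update_apply (fun _ => v) p x i).symm
  rw [hq, hq, hite, hite, covIter_const_eq_iterate hCt₁ hCt₂ hCa₁ hCa₂ hv,
    iterate_conn_tprod_update_const htprod hv, Function.iterate_zero_apply]

/-- Lemma: if `∇_v v = 0` and `∇_v w = 0` (integral curves of `v` are geodesics and `w` is
parallel along them), then `μ_E(v^{⊗k}) = ∇_v^k` for every `k > 0` on any bundle `E` with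
connection; in particular, on the tensor bundle `T^m M`,
`μ_T(v^{⊗k})(v^{⊗(l−1)} ⊗ q₂(v)w ⊗ v^{⊗(m−l)}) = v^{⊗(l−1)} ⊗ q_{k+2}(v)w ⊗ v^{⊗(m−l)}`,
where `q_{n}(v)w = (v^{⊗(n−2)} · ∇^{n−2}R)(w,v)v`.  Algebraic Koszul-style model: `A` is the
algebra of functions, `V` the module of vector fields with bracket `B`, action `D` on
functions and affine connection `Ca`; `S` models the sections of an arbitrary bundle with
connection `Cs`; `⨂[A] (i : Fin m), V` models `Γ(T^m M)` with its induced connection `Ct`;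
`derTensor Ca k (curvTensor Ca B) (fun _ => v) ![w, v, v]` is `q_{k+2}(v)w`. -/
theorem parallel_fields_covariant_power
    (A : Type*) [CommRing A] [Algebra ℝ A]
    (V : Type*) [AddCommGroup V] [Module A V]
    (D : V → A → A)
    (hDv : ∀ v w f, D (v + w) f = D v f + D w f)
    (hDs : ∀ (f : A) (v) (g), D (f • v) g = f * D v g)
    (hDadd : ∀ v f g, D v (f + g) = D v f + D v g)
    (hDder : ∀ v f g, D v (f * g) = f * D v g + D v f * g)
    (B : V → V → V)
    (hB : ∀ u v f, D (B u v) f = D u (D v f) - D v (D u f))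
    -- the affine connection on vector fields
    (Ca : V → V → V)
    (hCav : ∀ v w u, Ca (v + w) u = Ca v u + Ca w u)
    (hCas : ∀ (f : A) v u, Ca (f • v) u = f • Ca v u)
    (hCaadd : ∀ v u u', Ca v (u + u') = Ca v u + Ca v u')
    (hCaleib : ∀ v (f : A) u, Ca v (f • u) = f • Ca v u + D v f • u)
    (htorsion : ∀ u v, Ca u v - Ca v u = B u v)
    -- an arbitrary vector bundle with connection
    (S : Type*) [AddCommGroup S] [Module A S]
    (Cs : V → S → S)
    (hsv : ∀ v w u, Cs (v + w) u = Cs v u + Cs w u)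
    (hss : ∀ (f : A) v u, Cs (f • v) u = f • Cs v u)
    (hsadd : ∀ v u u', Cs v (u + u') = Cs v u + Cs v u')
    (hsleib : ∀ v (f : A) u, Cs v (f • u) = f • Cs v u + D v f • u)
    -- the induced connection on the `m`-th contravariant tensor bundle
    (m : ℕ)
    (Ct : V → (⨂[A] (_ : Fin m), V) → (⨂[A] (_ : Fin m), V))
    (htv : ∀ v w u, Ct (v + w) u = Ct v u + Ct w u)
    (hts : ∀ (f : A) v u, Ct (f • v) u = f • Ct v u)
    (htadd : ∀ v u u', Ct v (u + u') = Ct v u + Ct v u')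
    (htleib : ∀ v (f : A) u, Ct v (f • u) = f • Ct v u + D v f • u)
    (htprod : ∀ (v' : V) (u : Fin m → V),
      Ct v' (tprod A u) = ∑ i : Fin m, tprod A (Function.update u i (Ca v' (u i))))
    -- `v` has geodesic integral curves and `w` is parallel along them
    (v w : V) (hv : Ca v v = 0) (hw : Ca v w = 0) :
    (∀ k : ℕ, 0 < k → ∀ u : S,
        covIter Cs Ca k u (fun _ => v) = (fun s => Cs v s)^[k] u) ∧
    (∀ (k : ℕ) (p : Fin m),
        covIter Ct Ca k
            (tprod A fun i =>
              if i = p then derTensor Ca 0 (curvTensor Ca B) (fun _ => v) ![w, v, v] else v)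
            (fun _ => v) =
          tprod A fun i =>
            if i = p then derTensor Ca k (curvTensor Ca B) (fun _ => v) ![w, v, v] else v) :=
  parallel_fields_covariant_power_general A V B Ca hCav hCaadd htorsion S Cs hsv hsadd m Ct htv
    htadd htprod v w hv hw
end
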